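/- arXiv:2006.12158 — 2 statements merged into one kernel-verified Lean document; each statement's English description precedes it below -/
import Mathlib

section
/- Let n ≥ 2 and let ξ₁, η ∈ ℝ^{1+n} be lightlike vectors. Then for every ε > 0 there exist lightlike vectors ξ₂, ξ₃ ∈ ℝ^{1+n} with ‖ξ₂ − ξ₁‖ < ε and ‖ξ₃ − ξ₁‖ < ε such that η lies in the real linear span of ξ₁, ξ₂, ξ₃. -/
/-!
Write `ξ₁ = (t, x)`; being lightlike means `t ≠ 0` and `‖x‖ = |t|`. Since `n ≥ 2` there is a unit
vector `f ⊥ x` whose span together with `x` contains the spatial part of `η`. Rotating `x` by a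
small angle `±θ` in the plane of `x` and `f` keeps its length, so `ξ₂, ξ₃ = (t, cos θ x ± sin θ ‖x‖ f)`
are lightlike and close to `ξ₁`; and `ξ₁, ξ₂, ξ₃` span `ℝ e₀ ⊕ span {x, f}`, which contains `η`.
-/

open RealInnerProductSpace Submodule Module Real

/-- The Minkowski quadratic form `q(v) = -(v⁰)² + Σ_{i=1}^n (vⁱ)²` on `ℝ^{1+n}`,
here modeled as the Euclidean space `EuclideanSpace ℝ (Fin (n+1))` so that `‖·‖`
is the Euclidean norm. -/
def minkQ (n : ℕ) (v : EuclideanSpace ℝ (Fin (n + 1))) : ℝ :=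
  -(v 0) ^ 2 + ∑ i : Fin n, (v i.succ) ^ 2

/-- A vector of `ℝ^{1+n}` is lightlike if it is nonzero and null for the
Minkowski quadratic form. -/
def IsLightlike (n : ℕ) (v : EuclideanSpace ℝ (Fin (n + 1))) : Prop :=
  v ≠ 0 ∧ minkQ n v = 0

section Plane

variable {E : Type*} [NormedAddCommGroup E] [InnerProductSpace ℝ E]

theorem exists_norm_eq_one_inner_eq_zero_mem_span_pair (hE : 2 ≤ finrank ℝ E) {x : E}
    (hx : x ≠ 0) (y : E) : ∃ f : E, ‖f‖ = 1 ∧ ⟪x, f⟫ = 0 ∧ y ∈ span ℝ {x, f} := by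
  obtain ⟨y₁, hy₁, z, hz, rfl⟩ := (ℝ ∙ x).exists_add_mem_mem_orthogonal y
  obtain ⟨w, hw, hw0, hzw⟩ : ∃ w ∈ (ℝ ∙ x)ᗮ, w ≠ 0 ∧ z ∈ ℝ ∙ w := by
    by_cases hz0 : z = 0
    · have hK : (ℝ ∙ x) ≠ ⊤ := fun h => by
        have := finrank_span_singleton (K := ℝ) hx
        rw [h, finrank_top] at this
        omega
      obtain ⟨w, hw, hw0⟩ := exists_mem_ne_zero_of_ne_bot (mt orthogonal_eq_bot_iff.mp hK)
      exact ⟨w, hw, hw0, hz0 ▸ zero_mem _⟩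
    · exact ⟨z, hz, hz0, mem_span_singleton_self z⟩
  refine ⟨‖w‖⁻¹ • w, norm_smul_inv_norm hw0, ?_, ?_⟩
  · rw [real_inner_smul_right, mem_orthogonal_singleton_iff_inner_right.mp hw, mul_zero]
  · rw [span_insert, span_singleton_smul_eq (by simpa using hw0)]
    exact add_mem_sup hy₁ hzw

variable {x f : E}

theorem norm_smul_add_smul_sq (hf : ‖f‖ = 1) (hxf : ⟪x, f⟫ = 0) (a b : ℝ) :
    ‖a • x + b • f‖ ^ 2 = a ^ 2 * ‖x‖ ^ 2 + b ^ 2 := by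
  have h : ⟪a • x, b • f⟫ = 0 := by simp [real_inner_smul_left, real_inner_smul_right, hxf]
  rw [sq, norm_add_sq_eq_norm_sq_add_norm_sq_real h, norm_smul, norm_smul, hf]
  simp only [norm_eq_abs]
  nlinarith [sq_abs a, sq_abs b]

theorem norm_cos_smul_add_sin_smul (hf : ‖f‖ = 1) (hxf : ⟪x, f⟫ = 0) (θ : ℝ) :
    ‖cos θ • x + (sin θ * ‖x‖) • f‖ = ‖x‖ := by
  refine (sq_eq_sq₀ (norm_nonneg _) (norm_nonneg _)).mp ?_
  rw [norm_smul_add_smul_sq hf hxf]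
  linear_combination ‖x‖ ^ 2 * sin_sq_add_cos_sq θ

theorem norm_cos_smul_add_sin_smul_sub_le (hf : ‖f‖ = 1) (hxf : ⟪x, f⟫ = 0) (θ : ℝ) :
    ‖cos θ • x + (sin θ * ‖x‖) • f - x‖ ≤ |θ| * ‖x‖ := by
  refine (sq_le_sq₀ (norm_nonneg _) (by positivity)).mp ?_
  have h : cos θ • x + (sin θ * ‖x‖) • f - x = (cos θ - 1) • x + (sin θ * ‖x‖) • f := by
    module
  rw [h, norm_smul_add_smul_sq hf hxf]
  simp only [mul_pow, sq_abs]
  nlinarith [one_sub_sq_div_two_le_cos (x := θ), sin_sq_add_cos_sq θ, sq_nonneg ‖x‖]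

end Plane

theorem exists_pos_mul_lt_and_sin_pos {r ε : ℝ} (hr : 0 < r) (hε : 0 < ε) :
    ∃ θ : ℝ, 0 < θ ∧ θ * r < ε ∧ 0 < sin θ := by
  have hθε : min 1 (ε / (2 * r)) * r < ε := by
    have := (le_div_iff₀ (by positivity)).mp (min_le_right 1 (ε / (2 * r)))
    linarith
  have hθ : 0 < min 1 (ε / (2 * r)) := lt_min one_pos (by positivity)
  refine ⟨_, hθ, hθε, sin_pos_of_pos_of_lt_pi hθ ?_⟩
  exact (min_le_left _ _).trans_lt (by linarith [pi_gt_three])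

theorem span_le_span_perturbed_triple {K V : Type*} [Field K] [AddCommGroup V] [Module K V]
    {e u w : V} {t c s s' : K} (ht : t ≠ 0) (hc : c ≠ 1) (hs : s ≠ s') :
    span K {e, u, w} ≤ span K {t • e + u, t • e + (c • u + s • w), t • e + (c • u + s' • w)} := by
  set S := span K {t • e + u, t • e + (c • u + s • w), t • e + (c • u + s' • w)}
  have h₁ : t • e + u ∈ S := subset_span (by simp)
  have h₂ : t • e + (c • u + s • w) ∈ S := subset_span (by simp)
  have h₃ : t • e + (c • u + s' • w) ∈ S := subset_span (by simp)
  have hw : w ∈ S := by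
    refine (smul_mem_iff S (sub_ne_zero.mpr hs)).mp ?_
    convert sub_mem h₂ h₃ using 1
    module
  have hu : u ∈ S := by
    refine (smul_mem_iff S (sub_ne_zero.mpr hc)).mp ?_
    convert sub_mem (sub_mem h₂ h₁) (smul_mem S s hw) using 1
    module
  have he : e ∈ S := by
    refine (smul_mem_iff S ht).mp ?_
    convert sub_mem h₁ hu using 1
    module
  rw [span_le]
  simp [Set.insert_subset_iff, he, hu, hw]

namespace EuclideanSpace

variable {n : ℕ}

def cons (t : ℝ) (x : EuclideanSpace ℝ (Fin n)) : EuclideanSpace ℝ (Fin (n + 1)) :=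
  WithLp.toLp 2 (Fin.cons t x.ofLp)

def tail (v : EuclideanSpace ℝ (Fin (n + 1))) : EuclideanSpace ℝ (Fin n) :=
  WithLp.toLp 2 (Fin.tail v.ofLp)

@[simp]
theorem cons_zero (t : ℝ) (x : EuclideanSpace ℝ (Fin n)) : cons t x 0 = t := rfl

@[simp]
theorem cons_succ (t : ℝ) (x : EuclideanSpace ℝ (Fin n)) (i : Fin n) :
    cons t x i.succ = x i := rfl

@[simp]
theorem cons_self_tail (v : EuclideanSpace ℝ (Fin (n + 1))) : cons (v 0) (tail v) = v := by
  ext i; cases i using Fin.cases <;> rfl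

@[simp]
theorem cons_add_cons (t s : ℝ) (x y : EuclideanSpace ℝ (Fin n)) :
    cons t x + cons s y = cons (t + s) (x + y) := by
  ext i; cases i using Fin.cases <;> simp

@[simp]
theorem smul_cons (a t : ℝ) (x : EuclideanSpace ℝ (Fin n)) :
    a • cons t x = cons (a * t) (a • x) := by
  ext i; cases i using Fin.cases <;> simp

@[simp]
theorem cons_sub_cons (t s : ℝ) (x y : EuclideanSpace ℝ (Fin n)) :
    cons t x - cons s y = cons (t - s) (x - y) := by
  ext i; cases i using Fin.cases <;> simp

@[simp]
theorem cons_zero_zero : cons 0 (0 : EuclideanSpace ℝ (Fin n)) = 0 := by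
  ext i; cases i using Fin.cases <;> simp

theorem norm_cons_sq (t : ℝ) (x : EuclideanSpace ℝ (Fin n)) :
    ‖cons t x‖ ^ 2 = t ^ 2 + ‖x‖ ^ 2 := by
  simp [EuclideanSpace.norm_sq_eq, Fin.sum_univ_succ]

theorem norm_cons_sub_cons (t : ℝ) (x y : EuclideanSpace ℝ (Fin n)) :
    ‖cons t x - cons t y‖ = ‖x - y‖ := by
  refine (sq_eq_sq₀ (norm_nonneg _) (norm_nonneg _)).mp ?_
  rw [cons_sub_cons, norm_cons_sq, sub_self]
  ring

end EuclideanSpace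

open EuclideanSpace

theorem minkQ_cons {n : ℕ} (t : ℝ) (x : EuclideanSpace ℝ (Fin n)) :
    minkQ n (cons t x) = -t ^ 2 + ‖x‖ ^ 2 := by
  simp [minkQ, EuclideanSpace.norm_sq_eq]

theorem isLightlike_cons_iff {n : ℕ} {t : ℝ} {x : EuclideanSpace ℝ (Fin n)} :
    IsLightlike n (cons t x) ↔ t ≠ 0 ∧ ‖x‖ = |t| := by
  rw [IsLightlike, minkQ_cons, neg_add_eq_zero, ← sq_abs t,
    sq_eq_sq₀ (abs_nonneg t) (norm_nonneg x)]
  constructor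
  · rintro ⟨hne, h⟩
    refine ⟨fun ht => hne ?_, h.symm⟩
    rw [ht, abs_zero, eq_comm, norm_eq_zero] at h
    rw [ht, h, cons_zero_zero]
  · rintro ⟨ht, h⟩
    exact ⟨fun h0 => ht (by simpa using congrArg (· 0) h0), h.symm⟩

theorem cons_mem_span_cons_perturbed_triple {n : ℕ} {t : ℝ} {x f y : EuclideanSpace ℝ (Fin n)} {c s s' : ℝ}
    (ht : t ≠ 0) (hc : c ≠ 1) (hs : s ≠ s') (hy : y ∈ span ℝ {x, f}) (a : ℝ) :
    cons a y ∈ span ℝ {cons t x, cons t (c • x + s • f), cons t (c • x + s' • f)} := by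
  obtain ⟨p, q, rfl⟩ := mem_span_pair.mp hy
  have hξ₁ : cons t x = t • cons 1 0 + cons 0 x := by simp
  have hξ (r : ℝ) : cons t (c • x + r • f) = t • cons 1 0 + (c • cons 0 x + r • cons 0 f) := by
    simp
  have hη : cons a (p • x + q • f) = a • cons 1 0 + p • cons 0 x + q • cons 0 f := by simp
  rw [hξ₁, hξ, hξ, hη]
  exact span_le_span_perturbed_triple ht hc hs (mem_span_triple.mpr ⟨a, p, q, rfl⟩)

theorem lightlike_span_perturbation_general
    (n : ℕ) (hn : 2 ≤ n) (ξ₁ η : EuclideanSpace ℝ (Fin (n + 1)))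
    (h₁ : IsLightlike n ξ₁) :
    ∀ ε : ℝ, 0 < ε →
      ∃ ξ₂ ξ₃ : EuclideanSpace ℝ (Fin (n + 1)),
        IsLightlike n ξ₂ ∧ IsLightlike n ξ₃ ∧
        ‖ξ₂ - ξ₁‖ < ε ∧ ‖ξ₃ - ξ₁‖ < ε ∧
        η ∈ Submodule.span ℝ ({ξ₁, ξ₂, ξ₃} : Set (EuclideanSpace ℝ (Fin (n + 1)))) := by
  intro ε hε
  obtain ⟨t, x, rfl⟩ : ∃ t x, ξ₁ = cons t x := ⟨_, _, (cons_self_tail ξ₁).symm⟩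
  obtain ⟨a, y, rfl⟩ : ∃ a y, η = cons a y := ⟨_, _, (cons_self_tail η).symm⟩
  obtain ⟨ht, hx⟩ := isLightlike_cons_iff.mp h₁
  have hx0 : 0 < ‖x‖ := hx ▸ abs_pos.mpr ht
  obtain ⟨f, hf, hxf, hy⟩ :=
    exists_norm_eq_one_inner_eq_zero_mem_span_pair (by simpa using hn) (norm_pos_iff.mp hx0) y
  obtain ⟨θ, hθ, hθε, hsin⟩ := exists_pos_mul_lt_and_sin_pos hx0 hε
  have hcos : cos θ ≠ 1 := fun h => hsin.ne' (by nlinarith [sin_sq_add_cos_sq θ])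
  have hrot (φ : ℝ) (hφ : |φ| = θ) :
      IsLightlike n (cons t (cos φ • x + (sin φ * ‖x‖) • f)) ∧
      ‖cons t (cos φ • x + (sin φ * ‖x‖) • f) - cons t x‖ < ε := by
    rw [isLightlike_cons_iff, norm_cons_sub_cons, norm_cos_smul_add_sin_smul hf hxf]
    exact ⟨⟨ht, hx⟩, (norm_cos_smul_add_sin_smul_sub_le hf hxf φ).trans_lt (hφ ▸ hθε)⟩
  obtain ⟨hl₂, hd₂⟩ := hrot θ (abs_of_pos hθ)
  obtain ⟨hl₃, hd₃⟩ := hrot (-θ) (by rw [abs_neg, abs_of_pos hθ])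
  refine ⟨_, _, hl₂, hl₃, hd₂, hd₃, ?_⟩
  rw [cos_neg, sin_neg, neg_mul]
  exact cons_mem_span_cons_perturbed_triple ht hcos (neg_lt_self (mul_pos hsin hx0)).ne' hy a

/-- Given lightlike vectors `ξ₁, η` in `ℝ^{1+n}` (`n ≥ 2`) and any
`ε > 0`, there are lightlike vectors `ξ₂, ξ₃` within distance `ε` of `ξ₁` such that
`η` lies in the real linear span of `ξ₁, ξ₂, ξ₃`. -/
theorem lightlike_span_perturbation
    (n : ℕ) (hn : 2 ≤ n) (ξ₁ η : EuclideanSpace ℝ (Fin (n + 1)))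
    (h₁ : IsLightlike n ξ₁) (hη : IsLightlike n η) :
    ∀ ε : ℝ, 0 < ε →
      ∃ ξ₂ ξ₃ : EuclideanSpace ℝ (Fin (n + 1)),
        IsLightlike n ξ₂ ∧ IsLightlike n ξ₃ ∧
        ‖ξ₂ - ξ₁‖ < ε ∧ ‖ξ₃ - ξ₁‖ < ε ∧
        η ∈ Submodule.span ℝ ({ξ₁, ξ₂, ξ₃} : Set (EuclideanSpace ℝ (Fin (n + 1)))) :=
  lightlike_span_perturbation_general n hn ξ₁ η h₁
end

section
/- Let n ≥ 2 and let ξ₀, ξ₁ ∈ ℝ^{1+n} be future-pointing lightlike vectors such that ξ₀ is not a real scalar multiple of ξ₁. Then for every ε > 0 there exist an open set V ⊆ ℝ^{1+n} containing ξ₀ and a future-pointing lightlike vector ξ₂ with ‖ξ₂ − ξ₁‖ < ε such that: for every η ∈ V there exists a future-pointing lightlike vector ξ₃ with ‖ξ₃ − ξ₁‖ < ε, η lies in the real linear span of ξ₁, ξ₂, ξ₃, and η is not a real scalar multiple of ξ_j for any j = 1, 2, 3. -/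
/-- A vector of `ℝ^{1+n}` is lightlike if it is nonzero and null for the
Minkowski quadratic form; it is future-pointing lightlike if moreover `v⁰ > 0`. -/
def IsFutureLightlike (n : ℕ) (v : EuclideanSpace ℝ (Fin (n + 1))) : Prop :=
  v ≠ 0 ∧ minkQ n v = 0 ∧ 0 < v 0

/-!
Write `ξ₁ = t (e₀ + u)` with `u` a spatial unit vector and pick a spatial unit vector `w ⟂ u`.
Rotating `u` towards `w` by a small angle `±θ` gives future lightlike vectors near `ξ₁`. Their sum
and difference recover `e₀` and `w`, which do not both lie in the plane `span {ξ₀, ξ₁}`, so one of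
them, `ξ₂`, lies outside it; then `ξ₀` lies in the open set `V = (span {ξ₁, ξ₂})ᶜ`. For `η ∈ V`,
the Minkowski form of `ξ₁ + b ξ₂ + c η` is linear in `b`, with leading coefficient the nonzero
Minkowski pairing of `ξ₁` and `ξ₂`, so for every small `c ≠ 0` some small `b` makes it lightlike;
this is `ξ₃`.
-/

open Filter Topology Submodule QuadraticMap Module Real

section LinearAlgebra

variable {K M : Type*} [Field K] [AddCommGroup M] [Module K M]

theorem ne_smul_of_notMem_span {s : Set M} {x z : M} (hz : z ∉ span K s) (hx : x ∈ s) (a : K) :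
    z ≠ a • x := fun h ↦ hz (h ▸ smul_mem _ _ (subset_span hx))

theorem mem_span_triple_of_add_smul_add_smul {x y z : M} (b : K) {c : K} (hc : c ≠ 0) :
    z ∈ span K {x, y, x + b • y + c • z} := by
  have hmem : (x + b • y + c • z) - x - b • y ∈ span K {x, y, x + b • y + c • z} :=
    sub_mem (sub_mem (subset_span (by simp)) (subset_span (by simp)))
      (smul_mem _ _ (subset_span (by simp)))
  rw [show x + b • y + c • z - x - b • y = c • z by abel] at hmem
  exact (smul_mem_iff _ hc).1 hmem

theorem ne_smul_add_smul_add_smul_self {x y z : M} (hz : z ∉ span K {x, y})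
    (hx : x ∉ span K {y}) (a b c : K) : z ≠ a • (x + b • y + c • z) := by
  intro h
  have key : (1 - a * c) • z = a • (x + b • y) := by
    rw [sub_smul, one_smul, mul_smul]; nth_rw 1 [h]; module
  by_cases hac : 1 - a * c = 0
  · have ha : a ≠ 0 := by rintro rfl; simp at hac
    rw [hac, zero_smul, eq_comm, smul_eq_zero_iff_right ha, add_eq_zero_iff_eq_neg,
      ← neg_smul] at key
    exact hx (key ▸ smul_mem _ _ (mem_span_singleton_self y))
  · refine hz ?_
    rw [← inv_smul_smul₀ hac z, key]
    exact smul_mem _ _ (smul_mem _ _ (add_mem (subset_span (by simp))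
      (smul_mem _ _ (subset_span (by simp)))))

end LinearAlgebra

theorem exists_norm_eq_one_inner_eq_zero_of_two_lt_finrank {𝕜 E : Type*} [RCLike 𝕜]
    [NormedAddCommGroup E] [InnerProductSpace 𝕜 E] [FiniteDimensional 𝕜 E]
    (hE : 2 < finrank 𝕜 E) (u v : E) :
    ∃ w : E, ‖w‖ = 1 ∧ inner 𝕜 u w = 0 ∧ inner 𝕜 v w = 0 := by
  classical
  have hspan : span 𝕜 {u, v} ≠ ⊤ := by
    intro htop
    have := finrank_span_finset_le_card (R := 𝕜) ({u, v} : Finset E)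
    rw [Finset.coe_pair, Set.finrank, htop, finrank_top] at this
    have := Finset.card_le_two (a := u) (b := v)
    omega
  obtain ⟨w, hw, hw0⟩ := exists_mem_ne_zero_of_ne_bot (mt orthogonal_eq_bot_iff.1 hspan)
  refine ⟨(‖w‖⁻¹ : 𝕜) • w, norm_smul_inv_norm hw0, ?_, ?_⟩ <;>
    rw [inner_smul_right, inner_right_of_mem_orthogonal (subset_span (by simp)) hw, mul_zero]

namespace QuadraticMap

theorem map_smul_add_smul_add_smul {R M : Type*} [CommRing R] [AddCommGroup M] [Module R M]
    (Q : QuadraticMap R M R) (a b c : R) (x y z : M) :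
    Q (a • x + b • y + c • z) =
      a * a * Q x + b * b * Q y + c * c * Q z
        + a * b * polar Q x y + a * c * polar Q x z + b * c * polar Q y z := by
  simp only [QuadraticMap.map_add Q, QuadraticMap.map_smul, polar_add_left, polar_smul_left,
    polar_smul_right, smul_eq_mul]
  ring

theorem notMem_span_singleton_of_polar_ne_zero {R M : Type*} [CommRing R] [AddCommGroup M]
    [Module R M] (Q : QuadraticMap R M R) {x y : M} (hy : Q y = 0) (hxy : polar Q x y ≠ 0) :
    x ∉ span R {y} := by
  rintro hx
  obtain ⟨r, rfl⟩ := mem_span_singleton.1 hx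
  simp [polar_smul_left, polar_self, hy] at hxy

theorem eq_zero_of_mem_span_pair {K M : Type*} [Field K] [NeZero (2 : K)] [AddCommGroup M]
    [Module K M] (Q : QuadraticMap K M K) {x y e w : M} (he : e ∈ span K {x, y})
    (hw : w ∈ span K {x, y}) (hy : Q y = 0) (hQw : Q w ≠ 0) (hyw : polar Q y w = 0)
    (hew : polar Q e w = 0) : Q e = 0 := by
  obtain ⟨a, b, rfl⟩ := mem_span_pair.1 he
  obtain ⟨c, d, rfl⟩ := mem_span_pair.1 hw
  have key : c • (a • x + b • y) - a • (c • x + d • y) = (c * b - a * d) • y := by module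
  have hpolar := congrArg (polar Q · (c • x + d • y)) key
  simp only [polar_sub_left, polar_smul_left, hew, hyw, polar_self, smul_eq_mul] at hpolar
  have ha : a = 0 := by
    have : a * (2 * Q (c • x + d • y)) = 0 := by linear_combination -hpolar
    exact (mul_eq_zero.1 this).resolve_right (mul_ne_zero two_ne_zero hQw)
  simp [ha, QuadraticMap.map_smul, hy]

theorem exists_map_eq_zero_add_smul_add_smul_mem_nhds {𝕜 M : Type*} [NontriviallyNormedField 𝕜]
    [AddCommGroup M] [Module 𝕜 M] [TopologicalSpace M] [IsTopologicalAddGroup M]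
    [ContinuousSMul 𝕜 M] (Q : QuadraticMap 𝕜 M 𝕜) {x y : M} (hx : Q x = 0) (hy : Q y = 0)
    (hxy : polar Q x y ≠ 0) (z : M) {U : Set M} (hU : U ∈ 𝓝 x) :
    ∃ b c : 𝕜, c ≠ 0 ∧ Q (x + b • y + c • z) = 0 ∧ x + b • y + c • z ∈ U := by
  set D : 𝕜 → 𝕜 := fun c ↦ polar Q x y + c * polar Q y z
  -- `Q (x + b • y + c • z) = b * D c + c * (c * Q z + polar Q x z)` since `Q x = Q y = 0`
  set b : 𝕜 → 𝕜 := fun c ↦ -(c * (c * Q z + polar Q x z)) / D c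
  have hD : ContinuousAt D 0 := by fun_prop
  have hD0 : D 0 ≠ 0 := by simpa [D] using hxy
  have hb : ContinuousAt b 0 := by fun_prop (disch := exact hD0)
  have hlim : Tendsto (fun c ↦ x + b c • y + c • z) (𝓝 0) (𝓝 x) := by
    have : ContinuousAt (fun c ↦ x + b c • y + c • z) 0 := by fun_prop
    simpa [b] using this.tendsto
  obtain ⟨c, hc, hDc, hcU⟩ := ((eventually_mem_nhdsWithin (a := (0 : 𝕜)) (s := {0}ᶜ)).and
    (nhdsWithin_le_nhds ((hD.eventually_ne hD0).and (hlim.eventually_mem hU)))).exists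
  refine ⟨b c, c, hc, ?_, hcU⟩
  have := map_smul_add_smul_add_smul Q 1 (b c) c x y z
  simp only [one_smul, one_mul, hx, hy] at this
  have hbD : b c * (polar Q x y + c * polar Q y z) = -(c * (c * Q z + polar Q x z)) :=
    div_mul_cancel₀ _ hDc
  rw [this]
  linear_combination hbD

end QuadraticMap

theorem one_sub_cos_ne_zero {θ : ℝ} (hθ : sin θ ≠ 0) : 1 - cos θ ≠ 0 :=
  sub_ne_zero.2 fun h ↦ hθ (sin_eq_zero_iff_cos_eq.2 (.inl h.symm))

noncomputable def minkowskiForm (n : ℕ) : QuadraticForm ℝ (EuclideanSpace ℝ (Fin (n + 1))) :=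
  -QuadraticMap.sq.comp (EuclideanSpace.proj (𝕜 := ℝ) 0).toLinearMap
    + ∑ i : Fin n, QuadraticMap.sq.comp (EuclideanSpace.proj (𝕜 := ℝ) i.succ).toLinearMap

section Minkowski

variable {n : ℕ}

theorem minkowskiForm_apply (v : EuclideanSpace ℝ (Fin (n + 1))) :
    minkowskiForm n v = minkQ n v := by
  simp [minkowskiForm, minkQ, _root_.sq]

theorem isFutureLightlike_iff {v : EuclideanSpace ℝ (Fin (n + 1))} :
    IsFutureLightlike n v ↔ minkowskiForm n v = 0 ∧ 0 < v 0 := by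
  refine ⟨fun h ↦ ⟨(minkowskiForm_apply v).trans h.2.1, h.2.2⟩, fun h ↦ ⟨?_, ?_, h.2⟩⟩
  · rintro rfl; simp at h
  · rw [← minkowskiForm_apply, h.1]

theorem polar_minkowskiForm (v w : EuclideanSpace ℝ (Fin (n + 1))) :
    polar (minkowskiForm n) v w = 2 * (inner ℝ v w - 2 * v 0 * w 0) := by
  have hsum : ∑ i : Fin n, (w i.succ * v i.succ) = ∑ i : Fin n, v i.succ * w i.succ :=
    Finset.sum_congr rfl fun _ _ ↦ mul_comm _ _
  simp only [polar, minkowskiForm_apply, minkQ, PiLp.inner_apply, Fin.sum_univ_succ,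
    PiLp.add_apply, RCLike.inner_apply, conj_trivial, add_sq, Finset.sum_add_distrib, mul_assoc,
    ← Finset.mul_sum, hsum]
  ring

theorem minkowskiForm_single_zero : minkowskiForm n (EuclideanSpace.single 0 1) = -1 := by
  simp [minkowskiForm_apply, minkQ, Fin.succ_ne_zero]

theorem polar_minkowskiForm_single_zero (v : EuclideanSpace ℝ (Fin (n + 1))) :
    polar (minkowskiForm n) v (EuclideanSpace.single 0 1) = -2 * v 0 := by
  rw [polar_minkowskiForm, EuclideanSpace.inner_single_right]
  simp only [ringHom_apply, one_mul, PiLp.single_eq_same]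
  ring

theorem minkowskiForm_eq_norm_sq_of_apply_zero {w : EuclideanSpace ℝ (Fin (n + 1))}
    (hw0 : w 0 = 0) : minkowskiForm n w = ‖w‖ ^ 2 := by
  have := polar_minkowskiForm w w
  rw [polar_self, hw0, real_inner_self_eq_norm_sq, nsmul_eq_mul, Nat.cast_ofNat] at this
  linarith

/-- Writing `ξ = ξ⁰ (e₀ + u)` with `u` spatial, this is `ξ⁰ (e₀ + cos θ • u + sin θ • w)`. -/
noncomputable def spatialRotation (ξ w : EuclideanSpace ℝ (Fin (n + 1))) (θ : ℝ) :
    EuclideanSpace ℝ (Fin (n + 1)) :=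
  cos θ • ξ + (ξ 0 * (1 - cos θ)) • EuclideanSpace.single 0 1 + (ξ 0 * sin θ) • w

variable {ξ w : EuclideanSpace ℝ (Fin (n + 1))}

theorem spatialRotation_apply_zero (hw0 : w 0 = 0) (θ : ℝ) : spatialRotation ξ w θ 0 = ξ 0 := by
  simp only [spatialRotation, PiLp.add_apply, PiLp.smul_apply, smul_eq_mul, PiLp.single_eq_same,
    hw0]
  ring

theorem minkowskiForm_spatialRotation (hξ : minkowskiForm n ξ = 0) (hw0 : w 0 = 0)
    (hξw : inner ℝ ξ w = 0) (hw : ‖w‖ = 1) (θ : ℝ) :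
    minkowskiForm n (spatialRotation ξ w θ) = 0 := by
  rw [spatialRotation, map_smul_add_smul_add_smul, hξ, minkowskiForm_single_zero,
    minkowskiForm_eq_norm_sq_of_apply_zero hw0, hw, polar_minkowskiForm_single_zero,
    polar_minkowskiForm ξ w, polar_comm, polar_minkowskiForm_single_zero, hξw, hw0]
  linear_combination ξ 0 ^ 2 * sin_sq_add_cos_sq θ

theorem polar_minkowskiForm_spatialRotation_ne_zero (hξ : minkowskiForm n ξ = 0)
    (ht : ξ 0 ≠ 0) (hw0 : w 0 = 0) (hξw : inner ℝ ξ w = 0) {θ : ℝ} (hθ : sin θ ≠ 0) :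
    polar (minkowskiForm n) ξ (spatialRotation ξ w θ) ≠ 0 := by
  have hpolar : polar (minkowskiForm n) ξ (spatialRotation ξ w θ) = -2 * ξ 0 ^ 2 * (1 - cos θ) := by
    simp only [spatialRotation, polar_add_right, polar_smul_right, polar_self, hξ,
      polar_minkowskiForm_single_zero, polar_minkowskiForm ξ w, hξw, hw0, smul_eq_mul]
    ring
  rw [hpolar]
  exact mul_ne_zero (mul_ne_zero (by norm_num) (pow_ne_zero 2 ht)) (one_sub_cos_ne_zero hθ)

theorem spatialRotation_notMem_span_or (ξ₀ : EuclideanSpace ℝ (Fin (n + 1)))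
    (hξ : minkowskiForm n ξ = 0) (ht : ξ 0 ≠ 0) (hw0 : w 0 = 0) (hξw : inner ℝ ξ w = 0)
    (hw : ‖w‖ = 1) {θ : ℝ} (hθ : sin θ ≠ 0) :
    spatialRotation ξ w θ ∉ span ℝ {ξ₀, ξ} ∨ spatialRotation ξ w (-θ) ∉ span ℝ {ξ₀, ξ} := by
  by_contra! ⟨hp, hm⟩
  set P := span ℝ {ξ₀, ξ}
  have hξP : ξ ∈ P := subset_span (by simp)
  have he : EuclideanSpace.single 0 1 ∈ P := by
    refine (smul_mem_iff P (mul_ne_zero two_ne_zero (mul_ne_zero ht (one_sub_cos_ne_zero hθ)))).1 ?_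
    convert sub_mem (add_mem hp hm) (smul_mem P (2 * cos θ) hξP) using 1
    simp only [spatialRotation, cos_neg, sin_neg]
    module
  have hwP : w ∈ P := by
    refine (smul_mem_iff P (mul_ne_zero two_ne_zero (mul_ne_zero ht hθ))).1 ?_
    convert sub_mem hp hm using 1
    simp only [spatialRotation, cos_neg, sin_neg]
    module
  have := eq_zero_of_mem_span_pair (minkowskiForm n) he hwP hξ
    (by simp [minkowskiForm_eq_norm_sq_of_apply_zero hw0, hw])
    (by simp [polar_minkowskiForm, hξw, hw0])
    (by rw [polar_comm, polar_minkowskiForm_single_zero, hw0, mul_zero])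
  simp [minkowskiForm_single_zero] at this

theorem exists_spatialRotation_near_notMem_span (ξ₀ : EuclideanSpace ℝ (Fin (n + 1)))
    (hξ : minkowskiForm n ξ = 0) (ht : ξ 0 ≠ 0) (hw0 : w 0 = 0) (hξw : inner ℝ ξ w = 0)
    (hw : ‖w‖ = 1) {ε : ℝ} (hε : 0 < ε) :
    ∃ θ, sin θ ≠ 0 ∧ ‖spatialRotation ξ w θ - ξ‖ < ε ∧
      spatialRotation ξ w θ ∉ span ℝ {ξ₀, ξ} := by
  have hlim : Tendsto (spatialRotation ξ w) (𝓝 0) (𝓝 ξ) := by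
    have : Continuous (spatialRotation ξ w) := by unfold spatialRotation; fun_prop
    simpa [spatialRotation] using this.tendsto 0
  have hnear : ∀ᶠ θ in 𝓝 0, ‖spatialRotation ξ w θ - ξ‖ < ε := by
    simpa [dist_eq_norm] using Metric.tendsto_nhds.1 hlim ε hε
  have hnear' := hnear.and ((continuous_neg.tendsto' 0 0 neg_zero).eventually hnear)
  have hsin : ∀ᶠ θ in 𝓝[>] 0, sin θ ≠ 0 := by
    filter_upwards [Ioo_mem_nhdsGT pi_pos] with θ hθ using (sin_pos_of_pos_of_lt_pi hθ.1 hθ.2).ne'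
  obtain ⟨θ, hθ, hθpos, hθneg⟩ := (hsin.and (hnear'.filter_mono nhdsWithin_le_nhds)).exists
  rcases spatialRotation_notMem_span_or ξ₀ hξ ht hw0 hξw hw hθ with h | h
  · exact ⟨θ, hθ, hθpos, h⟩
  · exact ⟨-θ, by rwa [sin_neg, neg_ne_zero], hθneg, h⟩

end Minkowski

theorem lightlike_span_perturbation_open_general
    (n : ℕ) (hn : 2 ≤ n) (ξ₀ ξ₁ : EuclideanSpace ℝ (Fin (n + 1)))
    (h₁ : IsFutureLightlike n ξ₁)
    (h₀₁ : ∀ c : ℝ, ξ₀ ≠ c • ξ₁) :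
    ∀ ε : ℝ, 0 < ε →
      ∃ (V : Set (EuclideanSpace ℝ (Fin (n + 1)))) (ξ₂ : EuclideanSpace ℝ (Fin (n + 1))),
        IsOpen V ∧ ξ₀ ∈ V ∧ IsFutureLightlike n ξ₂ ∧ ‖ξ₂ - ξ₁‖ < ε ∧
        ∀ η ∈ V, ∃ ξ₃ : EuclideanSpace ℝ (Fin (n + 1)),
          IsFutureLightlike n ξ₃ ∧ ‖ξ₃ - ξ₁‖ < ε ∧
          η ∈ Submodule.span ℝ ({ξ₁, ξ₂, ξ₃} : Set (EuclideanSpace ℝ (Fin (n + 1)))) ∧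
          (∀ c : ℝ, η ≠ c • ξ₁) ∧ (∀ c : ℝ, η ≠ c • ξ₂) ∧ (∀ c : ℝ, η ≠ c • ξ₃) := by
  intro ε hε
  obtain ⟨hξ₁, ht⟩ := isFutureLightlike_iff.1 h₁
  obtain ⟨w, hw, hw0, hξ₁w⟩ := exists_norm_eq_one_inner_eq_zero_of_two_lt_finrank
    (by rw [finrank_euclideanSpace_fin]; omega) (EuclideanSpace.single (0 : Fin (n + 1)) 1) ξ₁
  rw [EuclideanSpace.inner_single_left, map_one, one_mul] at hw0
  obtain ⟨θ, hθ, hnear, hξ₂P⟩ :=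
    exists_spatialRotation_near_notMem_span ξ₀ hξ₁ ht.ne' hw0 hξ₁w hw hε
  set ξ₂ := spatialRotation ξ₁ w θ
  have hξ₂ : minkowskiForm n ξ₂ = 0 := minkowskiForm_spatialRotation hξ₁ hw0 hξ₁w hw θ
  have hpolar := polar_minkowskiForm_spatialRotation_ne_zero hξ₁ ht.ne' hw0 hξ₁w hθ
  have hξ₀ : ξ₀ ∉ span ℝ {ξ₁, ξ₂} := by
    intro h
    rw [Set.pair_comm] at h
    refine hξ₂P (mem_span_insert_exchange h fun h' ↦ ?_)
    obtain ⟨a, ha⟩ := mem_span_singleton.1 h'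
    exact h₀₁ a ha.symm
  refine ⟨(span ℝ {ξ₁, ξ₂} : Set _)ᶜ, ξ₂, (closed_of_finiteDimensional _).isOpen_compl, hξ₀,
    isFutureLightlike_iff.2 ⟨hξ₂, by rwa [spatialRotation_apply_zero hw0]⟩, hnear, fun η hη ↦ ?_⟩
  have hU : {v : EuclideanSpace ℝ (Fin (n + 1)) | ‖v - ξ₁‖ < ε ∧ 0 < v 0} ∈ 𝓝 ξ₁ :=
    IsOpen.mem_nhds ((isOpen_lt (by fun_prop) continuous_const).and
      (isOpen_lt continuous_const (by fun_prop))) ⟨by simpa using hε, ht⟩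
  obtain ⟨b, c, hc, hξ₃, hnear₃, hpos₃⟩ :=
    exists_map_eq_zero_add_smul_add_smul_mem_nhds _ hξ₁ hξ₂ hpolar η hU
  exact ⟨_, isFutureLightlike_iff.2 ⟨hξ₃, hpos₃⟩, hnear₃, mem_span_triple_of_add_smul_add_smul b hc,
    ne_smul_of_notMem_span hη (by simp), ne_smul_of_notMem_span hη (by simp),
    (ne_smul_add_smul_add_smul_self hη
      (notMem_span_singleton_of_polar_ne_zero _ hξ₂ hpolar) · b c)⟩

/-- Let `ξ₀, ξ₁` be future-pointing lightlike vectors in `ℝ^{1+n}`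
(`n ≥ 2`) with `ξ₀` not a real multiple of `ξ₁`. For every `ε > 0` there are an open
neighborhood `V` of `ξ₀` and a future-pointing lightlike `ξ₂` with `‖ξ₂ - ξ₁‖ < ε`
such that every `η ∈ V` admits a future-pointing lightlike `ξ₃` with `‖ξ₃ - ξ₁‖ < ε`,
`η ∈ span ℝ {ξ₁, ξ₂, ξ₃}`, and `η` is not a real multiple of any of `ξ₁, ξ₂, ξ₃`. -/
theorem lightlike_span_perturbation_open
    (n : ℕ) (hn : 2 ≤ n) (ξ₀ ξ₁ : EuclideanSpace ℝ (Fin (n + 1)))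
    (h₀ : IsFutureLightlike n ξ₀) (h₁ : IsFutureLightlike n ξ₁)
    (h₀₁ : ∀ c : ℝ, ξ₀ ≠ c • ξ₁) :
    ∀ ε : ℝ, 0 < ε →
      ∃ (V : Set (EuclideanSpace ℝ (Fin (n + 1)))) (ξ₂ : EuclideanSpace ℝ (Fin (n + 1))),
        IsOpen V ∧ ξ₀ ∈ V ∧ IsFutureLightlike n ξ₂ ∧ ‖ξ₂ - ξ₁‖ < ε ∧
        ∀ η ∈ V, ∃ ξ₃ : EuclideanSpace ℝ (Fin (n + 1)),
          IsFutureLightlike n ξ₃ ∧ ‖ξ₃ - ξ₁‖ < ε ∧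
          η ∈ Submodule.span ℝ ({ξ₁, ξ₂, ξ₃} : Set (EuclideanSpace ℝ (Fin (n + 1)))) ∧
          (∀ c : ℝ, η ≠ c • ξ₁) ∧ (∀ c : ℝ, η ≠ c • ξ₂) ∧ (∀ c : ℝ, η ≠ c • ξ₃) :=
  lightlike_span_perturbation_open_general n hn ξ₀ ξ₁ h₁ h₀₁
end
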